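/- arXiv:2510.02095 — 6 statements merged into one kernel-verified Lean document; each statement's English description precedes it below -/
import Mathlib

section
/- Let A, B ∈ SL_2(ℂ) with tr(AB) = tr(A^{-1}B^{-1}) = y. Then for every positive integer n, tr((A^{-1}B^{-1})^n (AB)^n) = 2 + (tr(BAB^{-1}A^{-1}) - 2)·S_{n-1}(y)². -/
open Matrix

/-- Cayley–Hamilton for 2×2 matrices of determinant one. -/
lemma sq_eq_trace_smul_sub_one (M : Matrix (Fin 2) (Fin 2) ℂ)
    (hdet : M.det = 1) :
    M * M = M.trace • M - 1 := by
  rw [Matrix.trace_fin_two]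
  rw [Matrix.eta_fin_two M]
  ext i j
  simp only [Matrix.det_fin_two] at hdet
  fin_cases i <;> fin_cases j <;>
    simp [Matrix.mul_apply, Fin.sum_univ_two] <;>
    first
      | ring1
      | linear_combination -hdet

/-- Powers of a determinant-one 2×2 matrix via Chebyshev-like polynomials. -/
lemma pow_formula
    (S : ℤ → ℂ → ℂ)
    (hS0 : ∀ z, S 0 z = 1) (hS1 : ∀ z, S 1 z = z)
    (hS : ∀ (k : ℤ) (z : ℂ), S k z = z * S (k - 1) z - S (k - 2) z)
    (M : Matrix (Fin 2) (Fin 2) ℂ) (y : ℂ)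
    (hdet : M.det = 1) (htr : M.trace = y) :
    ∀ n : ℕ, M ^ n = S ((n : ℤ) - 1) y • M - S ((n : ℤ) - 2) y • 1 := by
  have hneg1 : S (-1) y = 0 := by
    have h := hS 1 y
    simp only [show (1:ℤ) - 1 = 0 by norm_num, show (1:ℤ) - 2 = -1 by norm_num, hS0, hS1] at h
    linear_combination h
  have hneg2 : S (-2) y = -1 := by
    have h := hS 0 y
    simp only [show (0:ℤ) - 1 = -1 by norm_num, show (0:ℤ) - 2 = -2 by norm_num, hS0, hneg1] at h
    linear_combination h
  have hsq : M * M = y • M - 1 := by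
    rw [← htr]; exact sq_eq_trace_smul_sub_one M hdet
  intro n
  induction n with
  | zero =>
      norm_num [hneg1, hneg2]
  | succ n ih =>
      have hrec := hS (n + 1 : ℤ) y
      have e1 : ((n + 1 : ℕ) : ℤ) - 1 = (n : ℤ) + 1 - 1 := by push_cast; ring
      have e2 : ((n + 1 : ℕ) : ℤ) - 2 = (n : ℤ) + 1 - 2 := by push_cast; ring
      have e3 : (n : ℤ) + 1 - 1 = (n : ℤ) - 1 + 1 := by ring
      rw [pow_succ, ih, e1, e2]
      have e4 : (n : ℤ) + 1 - 2 = (n : ℤ) - 1 := by ring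
      have e5 : (n : ℤ) + 1 - 1 = (n : ℤ) := by ring
      rw [e4, e5]
      have hrec' : S ((n : ℤ)) y = y * S ((n : ℤ) - 1) y - S ((n : ℤ) - 2) y := hS n y
      rw [hrec', sub_mul, smul_mul_assoc, smul_mul_assoc, hsq, one_mul]
      rw [smul_sub, smul_smul]
      ext i j
      simp only [Matrix.sub_apply, Matrix.smul_apply, Matrix.one_apply, smul_eq_mul]
      ring

/-- The key Chebyshev identity `S_k² - y S_k S_{k-1} + S_{k-1}² = 1`. -/
lemma cheb_identity
    (S : ℤ → ℂ → ℂ)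
    (hS0 : ∀ z, S 0 z = 1) (hS1 : ∀ z, S 1 z = z)
    (hS : ∀ (k : ℤ) (z : ℂ), S k z = z * S (k - 1) z - S (k - 2) z)
    (y : ℂ) :
    ∀ m : ℕ, S (m : ℤ) y ^ 2 - y * S (m : ℤ) y * S ((m : ℤ) - 1) y
      + S ((m : ℤ) - 1) y ^ 2 = 1 := by
  have hneg1 : S (-1) y = 0 := by
    have h := hS 1 y
    simp only [show (1:ℤ) - 1 = 0 by norm_num, show (1:ℤ) - 2 = -1 by norm_num, hS0, hS1] at h
    linear_combination h
  intro m
  induction m with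
  | zero => norm_num [hS0, hneg1]
  | succ m ih =>
      have hrec := hS ((m : ℤ) + 1) y
      have e1 : (m : ℤ) + 1 - 1 = (m : ℤ) := by ring
      have e2 : (m : ℤ) + 1 - 2 = (m : ℤ) - 1 := by ring
      rw [e1, e2] at hrec
      have e3 : ((m + 1 : ℕ) : ℤ) = (m : ℤ) + 1 := by push_cast; ring
      rw [e3, e1, hrec]
      linear_combination ih

/-- trace of the inverse equals the trace in SL₂. -/
lemma trace_inv_eq (g : Matrix.SpecialLinearGroup (Fin 2) ℂ) :
    Matrix.trace ((g⁻¹ : Matrix.SpecialLinearGroup (Fin 2) ℂ) : Matrix (Fin 2) (Fin 2) ℂ)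
      = Matrix.trace (g : Matrix (Fin 2) (Fin 2) ℂ) := by
  rw [Matrix.SpecialLinearGroup.coe_inv, Matrix.adjugate_fin_two]
  rw [Matrix.trace_fin_two, Matrix.trace_fin_two]
  simp [add_comm]

theorem trace_U_formula
    (S : ℤ → ℂ → ℂ)
    (hS0 : ∀ z, S 0 z = 1) (hS1 : ∀ z, S 1 z = z)
    (hS : ∀ (k : ℤ) (z : ℂ), S k z = z * S (k - 1) z - S (k - 2) z)
    (A B : Matrix.SpecialLinearGroup (Fin 2) ℂ) (y : ℂ)
    (hy : Matrix.trace ((A * B : Matrix.SpecialLinearGroup (Fin 2) ℂ) : Matrix (Fin 2) (Fin 2) ℂ) = y)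
    (hy' : Matrix.trace ((A⁻¹ * B⁻¹ : Matrix.SpecialLinearGroup (Fin 2) ℂ) : Matrix (Fin 2) (Fin 2) ℂ) = y)
    (n : ℕ) (hn : 0 < n) :
    Matrix.trace (((A⁻¹ * B⁻¹) ^ n * (A * B) ^ n : Matrix.SpecialLinearGroup (Fin 2) ℂ) : Matrix (Fin 2) (Fin 2) ℂ)
      = 2 + (Matrix.trace ((B * A * B⁻¹ * A⁻¹ : Matrix.SpecialLinearGroup (Fin 2) ℂ) : Matrix (Fin 2) (Fin 2) ℂ) - 2)
          * (S ((n : ℤ) - 1) y) ^ 2 := by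
  set M : Matrix (Fin 2) (Fin 2) ℂ := ((A * B : Matrix.SpecialLinearGroup (Fin 2) ℂ) : Matrix (Fin 2) (Fin 2) ℂ) with hM
  set N : Matrix (Fin 2) (Fin 2) ℂ := ((A⁻¹ * B⁻¹ : Matrix.SpecialLinearGroup (Fin 2) ℂ) : Matrix (Fin 2) (Fin 2) ℂ) with hN
  have hdetM : M.det = 1 := (A * B).prop
  have hdetN : N.det = 1 := (A⁻¹ * B⁻¹).prop
  -- the commutator trace equality
  have htinv : ((A⁻¹ * B⁻¹ * (A * B))⁻¹ : Matrix.SpecialLinearGroup (Fin 2) ℂ)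
      = B⁻¹ * A⁻¹ * B * A := by group
  have htcomm : Matrix.trace ((B * A * B⁻¹ * A⁻¹ : Matrix.SpecialLinearGroup (Fin 2) ℂ) : Matrix (Fin 2) (Fin 2) ℂ)
      = Matrix.trace (N * M) := by
    have h1 : Matrix.trace (N * M)
        = Matrix.trace ((A⁻¹ * B⁻¹ * (A * B) : Matrix.SpecialLinearGroup (Fin 2) ℂ) : Matrix (Fin 2) (Fin 2) ℂ) := by
      simp [hM, hN]
    have h2 := trace_inv_eq (A⁻¹ * B⁻¹ * (A * B))
    rw [htinv] at h2
    rw [h1, ← h2]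
    have h3 : ((B⁻¹ * A⁻¹ * B * A : Matrix.SpecialLinearGroup (Fin 2) ℂ) : Matrix (Fin 2) (Fin 2) ℂ)
        = ((B⁻¹ * A⁻¹ : Matrix.SpecialLinearGroup (Fin 2) ℂ) : Matrix (Fin 2) (Fin 2) ℂ)
          * ((B * A : Matrix.SpecialLinearGroup (Fin 2) ℂ) : Matrix (Fin 2) (Fin 2) ℂ) := by
      simp [mul_assoc]
    have h4 : ((B * A * B⁻¹ * A⁻¹ : Matrix.SpecialLinearGroup (Fin 2) ℂ) : Matrix (Fin 2) (Fin 2) ℂ)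
        = ((B * A : Matrix.SpecialLinearGroup (Fin 2) ℂ) : Matrix (Fin 2) (Fin 2) ℂ)
          * ((B⁻¹ * A⁻¹ : Matrix.SpecialLinearGroup (Fin 2) ℂ) : Matrix (Fin 2) (Fin 2) ℂ) := by
      simp [mul_assoc]
    rw [h3, h4, Matrix.trace_mul_comm]
  -- power formulas
  have hMn := pow_formula S hS0 hS1 hS M y hdetM hy n
  have hNn := pow_formula S hS0 hS1 hS N y hdetN hy' n
  obtain ⟨m, rfl⟩ : ∃ m, n = m + 1 := ⟨n - 1, (Nat.succ_pred_eq_of_pos hn).symm⟩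
  set a : ℂ := S ((m + 1 : ℕ) - 1 : ℤ) y with ha
  set b : ℂ := S ((m + 1 : ℕ) - 2 : ℤ) y with hb
  have hcoe : (((A⁻¹ * B⁻¹) ^ (m + 1) * (A * B) ^ (m + 1) : Matrix.SpecialLinearGroup (Fin 2) ℂ) : Matrix (Fin 2) (Fin 2) ℂ)
      = N ^ (m + 1) * M ^ (m + 1) := by
    simp [hM, hN]
  rw [hcoe, hMn, hNn]
  have expand : (a • N - b • 1) * (a • M - b • 1)
      = (a * a) • (N * M) - (a * b) • N - ((b * a) • M - (b * b) • (1 : Matrix (Fin 2) (Fin 2) ℂ)) := by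
    simp only [sub_mul, mul_sub, smul_mul_assoc, mul_smul_comm, smul_smul, mul_one, one_mul]
    module
  rw [expand]
  rw [Matrix.trace_sub, Matrix.trace_sub, Matrix.trace_sub, Matrix.trace_smul,
    Matrix.trace_smul, Matrix.trace_smul, Matrix.trace_smul, Matrix.trace_one]
  rw [hy, hy', htcomm]
  have hcard : (Fintype.card (Fin 2) : ℂ) = 2 := by norm_num
  -- use the Chebyshev identity at m
  have hid := cheb_identity S hS0 hS1 hS y m
  have ea : a = S (m : ℤ) y := by rw [ha]; congr 1; push_cast; ring
  have eb : b = S ((m : ℤ) - 1) y := by rw [hb]; congr 1; push_cast; ring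
  rw [ea, eb]
  simp only [hcard, smul_eq_mul]
  linear_combination (2 : ℂ) * hid
end

section
/- Let m ∈ ℂ be nonzero, y ∈ ℂ, A = [[m, 1],[0, m^{-1}]], B = [[m, 0],[y - m² - m^{-2}, m^{-1}]], and for positive integers n, p set U = (A^{-1}B^{-1})^n (AB)^n, u = tr(U), and W = (AB)^n U^p. Then W·A - B·W = [[0, Φ],[(x² - 2 - y)·Φ, 0]], where x = m + m^{-1} and Φ = (S_n(y) - S_{n-1}(y))·S_p(u) - (S_{n-1}(y) - S_{n-2}(y))·S_{p-1}(u). -/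
open Matrix
lemma CH2' (a b c d : ℂ) (h : a * d - b * c = 1) :
    !![a, b; c, d] * !![a, b; c, d] = (a + d) • !![a, b; c, d] - 1 := by
  ext i j
  fin_cases i <;> fin_cases j <;>
    simp [Matrix.mul_apply, Fin.sum_univ_two, Matrix.one_apply] <;>
    first
      | ring1
      | linear_combination -h

lemma CH2 (M : Matrix (Fin 2) (Fin 2) ℂ) (h : M.det = 1) :
    M * M = M.trace • M - 1 := by
  obtain ⟨a, b, c, d, rfl⟩ : ∃ a b c d, M = !![a, b; c, d] :=
    ⟨_, _, _, _, Matrix.eta_fin_two M⟩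
  rw [Matrix.det_fin_two_of] at h
  rw [Matrix.trace_fin_two]
  simpa using CH2' a b c d h

lemma Sneg1 (S : ℤ → ℂ → ℂ)
    (hS0 : ∀ z, S 0 z = 1) (hS1 : ∀ z, S 1 z = z)
    (hS : ∀ (k : ℤ) (z : ℂ), S k z = z * S (k - 1) z - S (k - 2) z)
    (z : ℂ) : S (-1) z = 0 := by
  have h := hS 1 z
  norm_num [hS0, hS1] at h
  linear_combination h

lemma pow_form (S : ℤ → ℂ → ℂ)
    (hS0 : ∀ z, S 0 z = 1) (hS1 : ∀ z, S 1 z = z)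
    (hS : ∀ (k : ℤ) (z : ℂ), S k z = z * S (k - 1) z - S (k - 2) z)
    (M : Matrix (Fin 2) (Fin 2) ℂ) (hdet : M.det = 1) (t : ℂ) (ht : M.trace = t) :
    ∀ n : ℕ, 1 ≤ n → M ^ n = S ((n : ℤ) - 1) t • M - S ((n : ℤ) - 2) t • 1 := by
  intro n hn
  induction n, hn using Nat.le_induction with
  | base =>
      norm_num [hS0, Sneg1 S hS0 hS1 hS]
  | succ n hn ih =>
      have key := CH2 M hdet
      rw [ht] at key
      have h1 : ((n : ℤ) + 1 : ℤ) - 1 = (n : ℤ) := by ring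
      have h2 : ((n : ℤ) + 1 : ℤ) - 2 = (n : ℤ) - 1 := by ring
      push_cast
      rw [h1, h2, pow_succ, ih, sub_mul, smul_mul_assoc, smul_mul_assoc,
        one_mul, key, hS (n : ℤ) t]
      module

lemma norm_rel (S : ℤ → ℂ → ℂ)
    (hS0 : ∀ z, S 0 z = 1) (hS1 : ∀ z, S 1 z = z)
    (hS : ∀ (k : ℤ) (z : ℂ), S k z = z * S (k - 1) z - S (k - 2) z)
    (z : ℂ) : ∀ k : ℕ,
      (S k z) ^ 2 - z * S k z * S ((k : ℤ) - 1) z + (S ((k : ℤ) - 1) z) ^ 2 = 1 := by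
  intro k
  induction k with
  | zero => norm_num [hS0, Sneg1 S hS0 hS1 hS]
  | succ k ih =>
      have hrec := hS ((k : ℤ) + 1) z
      have h2 : ((k : ℤ) + 1 : ℤ) - 2 = (k : ℤ) - 1 := by ring
      rw [add_sub_cancel_right, h2] at hrec
      push_cast
      rw [add_sub_cancel_right]
      linear_combination ih + (S ((k : ℤ) + 1) z - S ((k : ℤ) - 1) z) * hrec

theorem WA_minus_BW
    (S : ℤ → ℂ → ℂ)
    (hS0 : ∀ z, S 0 z = 1) (hS1 : ∀ z, S 1 z = z)
    (hS : ∀ (k : ℤ) (z : ℂ), S k z = z * S (k - 1) z - S (k - 2) z)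
    (m y : ℂ) (hm : m ≠ 0)
    (A B : Matrix (Fin 2) (Fin 2) ℂ)
    (hA : A = !![m, 1; 0, m⁻¹])
    (hB : B = !![m, 0; y - m ^ 2 - m⁻¹ ^ 2, m⁻¹])
    (n p : ℕ) (hn : 0 < n) (hp : 0 < p)
    (U : Matrix (Fin 2) (Fin 2) ℂ) (hU : U = (A⁻¹ * B⁻¹) ^ n * (A * B) ^ n)
    (u : ℂ) (hu : u = Matrix.trace U)
    (W : Matrix (Fin 2) (Fin 2) ℂ) (hW : W = (A * B) ^ n * U ^ p)
    (x : ℂ) (hx : x = m + m⁻¹)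
    (Φ : ℂ)
    (hΦ : Φ = (S n y - S ((n : ℤ) - 1) y) * S p u
            - (S ((n : ℤ) - 1) y - S ((n : ℤ) - 2) y) * S ((p : ℤ) - 1) u) :
    W * A - B * W = !![0, Φ; (x ^ 2 - 2 - y) * Φ, 0] := by
  have hm' : m * m⁻¹ = 1 := mul_inv_cancel₀ hm
  have hAinv : A⁻¹ = !![m⁻¹, -1; 0, m] := by
    apply Matrix.inv_eq_right_inv
    rw [hA]
    ext i j
    fin_cases i <;> fin_cases j <;>
      simp [Matrix.mul_apply, Fin.sum_univ_two, Matrix.one_apply] <;>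
      first
        | ring1
        | linear_combination hm'
        | linear_combination -hm'
  have hBinv : B⁻¹ = !![m⁻¹, 0; -(y - m ^ 2 - m⁻¹ ^ 2), m] := by
    apply Matrix.inv_eq_right_inv
    rw [hB]
    ext i j
    fin_cases i <;> fin_cases j <;>
      simp [Matrix.mul_apply, Fin.sum_univ_two, Matrix.one_apply] <;>
      first
        | ring1
        | linear_combination hm'
        | linear_combination -hm'
  have hdA : A.det = 1 := by
    rw [hA, Matrix.det_fin_two_of]; linear_combination hm'
  have hdB : B.det = 1 := by
    rw [hB, Matrix.det_fin_two_of]; linear_combination hm'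
  have hdC : (A * B).det = 1 := by rw [Matrix.det_mul, hdA, hdB, one_mul]
  have hdE : (A⁻¹ * B⁻¹).det = 1 := by
    rw [Matrix.det_mul, hAinv, hBinv, Matrix.det_fin_two_of, Matrix.det_fin_two_of]
    field_simp
    ring
  have htC : (A * B).trace = y := by
    rw [hA, hB, Matrix.trace_fin_two]
    simp only [Matrix.mul_apply, Fin.sum_univ_two, Matrix.of_apply, Matrix.cons_val',
      Matrix.cons_val_zero, Matrix.cons_val_one, Matrix.head_cons, Matrix.empty_val',
      Matrix.cons_val_fin_one, Fin.isValue, Matrix.head_fin_const]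
    ring1
  have htE : (A⁻¹ * B⁻¹).trace = y := by
    rw [hAinv, hBinv, Matrix.trace_fin_two]
    simp only [Matrix.mul_apply, Fin.sum_univ_two, Matrix.of_apply, Matrix.cons_val',
      Matrix.cons_val_zero, Matrix.cons_val_one, Matrix.head_cons, Matrix.empty_val',
      Matrix.cons_val_fin_one, Fin.isValue, Matrix.head_fin_const]
    ring1
  have hdU : U.det = 1 := by
    rw [hU, Matrix.det_mul, Matrix.det_pow, Matrix.det_pow, hdC, hdE]
    norm_num
  have htU : U.trace = u := hu.symm
  have hCn := pow_form S hS0 hS1 hS (A * B) hdC y htC n hn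
  have hEn := pow_form S hS0 hS1 hS (A⁻¹ * B⁻¹) hdE y htE n hn
  have hUp := pow_form S hS0 hS1 hS U hdU u htU p hp
  have hR1 := norm_rel S hS0 hS1 hS y (n - 1)
  rw [show ((n - 1 : ℕ) : ℤ) = (n : ℤ) - 1 by omega,
      show ((n : ℤ) - 1) - 1 = (n : ℤ) - 2 by ring] at hR1
  have hSn := hS (n : ℤ) y
  have hSp := hS (p : ℤ) u
  have hu' : u = (2 * (S ((n:ℤ)-2) y)^2 - 2 * y*(S ((n:ℤ)-1) y)*(S ((n:ℤ)-2) y) + y^2*(S ((n:ℤ)-1) y)^2 - m⁻¹^2*y*(S ((n:ℤ)-1) y)^2 - 2 * m*m⁻¹*y*(S ((n:ℤ)-1) y)^2 + 2 * m*m⁻¹^3*(S ((n:ℤ)-1) y)^2 - m^2*y*(S ((n:ℤ)-1) y)^2 + 2 * m^2*m⁻¹^2*(S ((n:ℤ)-1) y)^2 + 2 * m^3*m⁻¹*(S ((n:ℤ)-1) y)^2) := by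
    rw [hu, hU, hEn, hCn, hAinv, hBinv, hA, hB, Matrix.trace_fin_two]
    simp [Matrix.mul_apply, Matrix.sub_apply, Matrix.smul_apply, Matrix.one_apply,
      Fin.sum_univ_two, smul_eq_mul]
    ring
  rw [hW, hUp, hU, hEn, hCn, hΦ, hx, hAinv, hBinv, hA, hB]
  ext i j
  fin_cases i <;> fin_cases j <;>
    simp only [Matrix.mul_apply, Matrix.sub_apply, Matrix.smul_apply, Matrix.one_apply,
      Matrix.of_apply, Matrix.cons_val', Matrix.cons_val_zero, Matrix.cons_val_one,
      Matrix.head_cons, Matrix.head_fin_const, Matrix.empty_val', Matrix.cons_val_fin_one,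
      Fin.sum_univ_two, smul_eq_mul, Fin.isValue, Fin.zero_eta, Fin.mk_one,
      Matrix.cons_val_one, Matrix.head_cons, if_true, if_false]
  · norm_num; ring1
  · norm_num
    first
      | linear_combination (- (S (p:ℤ) u)) * hSn + ((S ((n:ℤ)-2) y) + (S ((n:ℤ)-1) y) - y*(S ((n:ℤ)-1) y)) * hSp + ((S ((n:ℤ)-2) y)*(S ((p:ℤ)-1) u) + (S ((n:ℤ)-1) y)*(S ((p:ℤ)-1) u) - y*(S ((n:ℤ)-1) y)*(S ((p:ℤ)-1) u)) * hu' + ((S ((n:ℤ)-2) y)*(S ((p:ℤ)-1) u) + 2 * (S ((n:ℤ)-1) y)*(S ((p:ℤ)-1) u) - 3 * m*m⁻¹*(S ((n:ℤ)-1) y)*(S ((p:ℤ)-1) u)) * hR1 + ((S ((n:ℤ)-1) y)*(S ((p:ℤ)-2) u) - 3 * (S ((n:ℤ)-1) y)*(S ((p:ℤ)-1) u) + (S ((n:ℤ)-1) y)^2*(S ((n:ℤ)-2) y)*(S ((p:ℤ)-1) u) + 2 * (S ((n:ℤ)-1) y)^3*(S ((p:ℤ)-1) u) - y^2*(S ((n:ℤ)-1)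 y)^3*(S ((p:ℤ)-1) u) + m⁻¹^2*y*(S ((n:ℤ)-1) y)^3*(S ((p:ℤ)-1) u) + m*m⁻¹*(S ((n:ℤ)-1) y)^2*(S ((n:ℤ)-2) y)*(S ((p:ℤ)-1) u) - m*m⁻¹*(S ((n:ℤ)-1) y)^3*(S ((p:ℤ)-1) u) + 2 * m*m⁻¹*y*(S ((n:ℤ)-1) y)^3*(S ((p:ℤ)-1) u) - 2 * m*m⁻¹^3*(S ((n:ℤ)-1) y)^3*(S ((p:ℤ)-1) u) + m^2*y*(S ((n:ℤ)-1) y)^3*(S ((p:ℤ)-1) u) - 3 * m^2*m⁻¹^2*(S ((n:ℤ)-1) y)^3*(S ((p:ℤ)-1) u) - 2 * m^3*m⁻¹*(S ((n:ℤ)-1) y)^3*(S ((p:ℤ)-1) u)) * hm'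
      | linear_combination -((- (S (p:ℤ) u)) * hSn + ((S ((n:ℤ)-2) y) + (S ((n:ℤ)-1) y) - y*(S ((n:ℤ)-1) y)) * hSp + ((S ((n:ℤ)-2) y)*(S ((p:ℤ)-1) u) + (S ((n:ℤ)-1) y)*(S ((p:ℤ)-1) u) - y*(S ((n:ℤ)-1) y)*(S ((p:ℤ)-1) u)) * hu' + ((S ((n:ℤ)-2) y)*(S ((p:ℤ)-1) u) + 2 * (S ((n:ℤ)-1) y)*(S ((p:ℤ)-1) u) - 3 * m*m⁻¹*(S ((n:ℤ)-1) y)*(S ((p:ℤ)-1) u)) * hR1 + ((S ((n:ℤ)-1) y)*(S ((p:ℤ)-2) u) - 3 * (S ((n:ℤ)-1) y)*(S ((p:ℤ)-1) u) + (S ((n:ℤ)-1) y)^2*(S ((n:ℤ)-2) y)*(S ((p:ℤ)-1) u) + 2 * (S ((n:ℤ)-1) y)^3*(S ((p:ℤ)-1) u) - y^2*(S ((n:ℤ)-1) y)^3*(S ((p:ℤ)-1) u) + m⁻¹^2*y*(S ((n:ℤ)-1) y)^3*(S ((p:ℤ)-1) u) + m*m⁻¹*(S ((n:ℤ)-1)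 y)^2*(S ((n:ℤ)-2) y)*(S ((p:ℤ)-1) u) - m*m⁻¹*(S ((n:ℤ)-1) y)^3*(S ((p:ℤ)-1) u) + 2 * m*m⁻¹*y*(S ((n:ℤ)-1) y)^3*(S ((p:ℤ)-1) u) - 2 * m*m⁻¹^3*(S ((n:ℤ)-1) y)^3*(S ((p:ℤ)-1) u) + m^2*y*(S ((n:ℤ)-1) y)^3*(S ((p:ℤ)-1) u) - 3 * m^2*m⁻¹^2*(S ((n:ℤ)-1) y)^3*(S ((p:ℤ)-1) u) - 2 * m^3*m⁻¹*(S ((n:ℤ)-1) y)^3*(S ((p:ℤ)-1) u)) * hm')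
  · norm_num
    first
      | linear_combination (2 * (S (p:ℤ) u) + y*(S (p:ℤ) u) - m⁻¹^2*(S (p:ℤ) u) - 2 * m*m⁻¹*(S (p:ℤ) u) - m^2*(S (p:ℤ) u)) * hSn + (- 2 * (S ((n:ℤ)-2) y) - 2 * (S ((n:ℤ)-1) y) - y*(S ((n:ℤ)-2) y) + y*(S ((n:ℤ)-1) y) + y^2*(S ((n:ℤ)-1) y) + m⁻¹^2*(S ((n:ℤ)-2) y) + m⁻¹^2*(S ((n:ℤ)-1) y) - m⁻¹^2*y*(S ((n:ℤ)-1) y) + 2 * m*m⁻¹*(S ((n:ℤ)-2) y) + 2 * m*m⁻¹*(S ((n:ℤ)-1) y) - 2 * m*m⁻¹*y*(S ((n:ℤ)-1) y) + m^2*(S ((n:ℤ)-2) y) + m^2*(S ((n:ℤ)-1) y) - m^2*y*(S ((n:ℤ)-1) y)) * hSp + (- 2 * (S ((n:ℤ)-2) y)*(S ((p:ℤ)-1) u) - 2 * (S ((n:ℤ)-1) y)*(S ((p:ℤ)-1) u) - y*(S ((n:ℤ)-2) y)*(S ((p:ℤ)-1) u) + y*(S ((n:ℤ)-1) y)*(S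 ((p:ℤ)-1) u) + y^2*(S ((n:ℤ)-1) y)*(S ((p:ℤ)-1) u) + m⁻¹^2*(S ((n:ℤ)-2) y)*(S ((p:ℤ)-1) u) + m⁻¹^2*(S ((n:ℤ)-1) y)*(S ((p:ℤ)-1) u) - m⁻¹^2*y*(S ((n:ℤ)-1) y)*(S ((p:ℤ)-1) u) + 2 * m*m⁻¹*(S ((n:ℤ)-2) y)*(S ((p:ℤ)-1) u) + 2 * m*m⁻¹*(S ((n:ℤ)-1) y)*(S ((p:ℤ)-1) u) - 2 * m*m⁻¹*y*(S ((n:ℤ)-1) y)*(S ((p:ℤ)-1) u) + m^2*(S ((n:ℤ)-2) y)*(S ((p:ℤ)-1) u) + m^2*(S ((n:ℤ)-1) y)*(S ((p:ℤ)-1) u) - m^2*y*(S ((n:ℤ)-1) y)*(S ((p:ℤ)-1) u)) * hu' + (- 4 * (S ((n:ℤ)-2) y)*(S ((p:ℤ)-1) u) - 4 * (S ((n:ℤ)-1) y)*(S ((p:ℤ)-1) u) - y*(S ((n:ℤ)-2) y)*(S ((p:ℤ)-1) u) + 2 * y*(S ((n:ℤ)-1) y)*(S ((p:ℤ)-1)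 u) + m⁻¹^2*(S ((n:ℤ)-2) y)*(S ((p:ℤ)-1) u) + 2 * m⁻¹^2*(S ((n:ℤ)-1) y)*(S ((p:ℤ)-1) u) + 4 * m*m⁻¹*(S ((n:ℤ)-2) y)*(S ((p:ℤ)-1) u) + 4 * m*m⁻¹*(S ((n:ℤ)-1) y)*(S ((p:ℤ)-1) u) - m*m⁻¹*y*(S ((n:ℤ)-1) y)*(S ((p:ℤ)-1) u) - 3 * m*m⁻¹^3*(S ((n:ℤ)-1) y)*(S ((p:ℤ)-1) u) + m^2*(S ((n:ℤ)-2) y)*(S ((p:ℤ)-1) u) + 2 * m^2*(S ((n:ℤ)-1) y)*(S ((p:ℤ)-1) u) - 3 * m^3*m⁻¹*(S ((n:ℤ)-1) y)*(S ((p:ℤ)-1) u)) * hR1 + (- 2 * (S ((n:ℤ)-2) y)*(S ((p:ℤ)-2) u) + 2 * (S ((n:ℤ)-2) y)*(S ((p:ℤ)-1) u) - 2 * (S ((n:ℤ)-1) y)*(S ((p:ℤ)-2) u) + 6 * (S ((n:ℤ)-1) y)*(S ((p:ℤ)-1) u) - 4 * (S ((n:ℤ)-1) y)^2*(S ((n:ℤ)-2)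 y)*(S ((p:ℤ)-1) u) - 4 * (S ((n:ℤ)-1) y)^3*(S ((p:ℤ)-1) u) + y*(S ((n:ℤ)-1) y)*(S ((p:ℤ)-2) u) - y*(S ((n:ℤ)-1) y)*(S ((p:ℤ)-1) u) - y*(S ((n:ℤ)-1) y)^2*(S ((n:ℤ)-2) y)*(S ((p:ℤ)-1) u) + 2 * y*(S ((n:ℤ)-1) y)^3*(S ((p:ℤ)-1) u) + 2 * y^2*(S ((n:ℤ)-1) y)^2*(S ((n:ℤ)-2) y)*(S ((p:ℤ)-1) u) + 2 * y^2*(S ((n:ℤ)-1) y)^3*(S ((p:ℤ)-1) u) - y^3*(S ((n:ℤ)-1) y)^3*(S ((p:ℤ)-1) u) + m⁻¹^2*(S ((n:ℤ)-1) y)*(S ((p:ℤ)-2) u) - 3 * m⁻¹^2*(S ((n:ℤ)-1) y)*(S ((p:ℤ)-1) u) + m⁻¹^2*(S ((n:ℤ)-1) y)^2*(S ((n:ℤ)-2) y)*(S ((p:ℤ)-1) u) + 2 * m⁻¹^2*(S ((n:ℤ)-1) y)^3*(S ((p:ℤ)-1) u) - 2 * m⁻¹^2*y*(S ((n:ℤ)-1)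 y)^2*(S ((n:ℤ)-2) y)*(S ((p:ℤ)-1) u) - 2 * m⁻¹^2*y*(S ((n:ℤ)-1) y)^3*(S ((p:ℤ)-1) u) + m⁻¹^4*y*(S ((n:ℤ)-1) y)^3*(S ((p:ℤ)-1) u) - 5 * m*m⁻¹*y*(S ((n:ℤ)-1) y)^2*(S ((n:ℤ)-2) y)*(S ((p:ℤ)-1) u) - 3 * m*m⁻¹*y*(S ((n:ℤ)-1) y)^3*(S ((p:ℤ)-1) u) + 2 * m*m⁻¹*y^2*(S ((n:ℤ)-1) y)^3*(S ((p:ℤ)-1) u) + 5 * m*m⁻¹^3*(S ((n:ℤ)-1) y)^2*(S ((n:ℤ)-2) y)*(S ((p:ℤ)-1) u) + 3 * m*m⁻¹^3*(S ((n:ℤ)-1) y)^3*(S ((p:ℤ)-1) u) - 2 * m*m⁻¹^5*(S ((n:ℤ)-1) y)^3*(S ((p:ℤ)-1) u) + m^2*(S ((n:ℤ)-1) y)*(S ((p:ℤ)-2) u) - 3 * m^2*(S ((n:ℤ)-1) y)*(S ((p:ℤ)-1) u) + m^2*(S ((n:ℤ)-1) y)^2*(S ((n:ℤ)-2) y)*(S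 ((p:ℤ)-1) u) + 2 * m^2*(S ((n:ℤ)-1) y)^3*(S ((p:ℤ)-1) u) - 2 * m^2*y*(S ((n:ℤ)-1) y)^2*(S ((n:ℤ)-2) y)*(S ((p:ℤ)-1) u) - 2 * m^2*y*(S ((n:ℤ)-1) y)^3*(S ((p:ℤ)-1) u) + 4 * m^2*m⁻¹^2*(S ((n:ℤ)-1) y)^2*(S ((n:ℤ)-2) y)*(S ((p:ℤ)-1) u) + 4 * m^2*m⁻¹^2*(S ((n:ℤ)-1) y)^3*(S ((p:ℤ)-1) u) + m^2*m⁻¹^2*y*(S ((n:ℤ)-1) y)^3*(S ((p:ℤ)-1) u) - 3 * m^2*m⁻¹^4*(S ((n:ℤ)-1) y)^3*(S ((p:ℤ)-1) u) + 5 * m^3*m⁻¹*(S ((n:ℤ)-1) y)^2*(S ((n:ℤ)-2) y)*(S ((p:ℤ)-1) u) + 3 * m^3*m⁻¹*(S ((n:ℤ)-1) y)^3*(S ((p:ℤ)-1) u) - 4 * m^3*m⁻¹^3*(S ((n:ℤ)-1) y)^3*(S ((p:ℤ)-1) u) + m^4*y*(S ((n:ℤ)-1) y)^3*(S ((p:ℤ)-1)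 u) - 3 * m^4*m⁻¹^2*(S ((n:ℤ)-1) y)^3*(S ((p:ℤ)-1) u) - 2 * m^5*m⁻¹*(S ((n:ℤ)-1) y)^3*(S ((p:ℤ)-1) u)) * hm'
      | linear_combination -((2 * (S (p:ℤ) u) + y*(S (p:ℤ) u) - m⁻¹^2*(S (p:ℤ) u) - 2 * m*m⁻¹*(S (p:ℤ) u) - m^2*(S (p:ℤ) u)) * hSn + (- 2 * (S ((n:ℤ)-2) y) - 2 * (S ((n:ℤ)-1) y) - y*(S ((n:ℤ)-2) y) + y*(S ((n:ℤ)-1) y) + y^2*(S ((n:ℤ)-1) y) + m⁻¹^2*(S ((n:ℤ)-2) y) + m⁻¹^2*(S ((n:ℤ)-1) y) - m⁻¹^2*y*(S ((n:ℤ)-1) y) + 2 * m*m⁻¹*(S ((n:ℤ)-2) y) + 2 * m*m⁻¹*(S ((n:ℤ)-1) y) - 2 * m*m⁻¹*y*(S ((n:ℤ)-1) y) + m^2*(S ((n:ℤ)-2) y) + m^2*(S ((n:ℤ)-1) y) - m^2*y*(S ((n:ℤ)-1) y)) * hSp + (- 2 * (S ((n:ℤ)-2) y)*(S ((p:ℤ)-1)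 u) - 2 * (S ((n:ℤ)-1) y)*(S ((p:ℤ)-1) u) - y*(S ((n:ℤ)-2) y)*(S ((p:ℤ)-1) u) + y*(S ((n:ℤ)-1) y)*(S ((p:ℤ)-1) u) + y^2*(S ((n:ℤ)-1) y)*(S ((p:ℤ)-1) u) + m⁻¹^2*(S ((n:ℤ)-2) y)*(S ((p:ℤ)-1) u) + m⁻¹^2*(S ((n:ℤ)-1) y)*(S ((p:ℤ)-1) u) - m⁻¹^2*y*(S ((n:ℤ)-1) y)*(S ((p:ℤ)-1) u) + 2 * m*m⁻¹*(S ((n:ℤ)-2) y)*(S ((p:ℤ)-1) u) + 2 * m*m⁻¹*(S ((n:ℤ)-1) y)*(S ((p:ℤ)-1) u) - 2 * m*m⁻¹*y*(S ((n:ℤ)-1) y)*(S ((p:ℤ)-1) u) + m^2*(S ((n:ℤ)-2) y)*(S ((p:ℤ)-1) u) + m^2*(S ((n:ℤ)-1) y)*(S ((p:ℤ)-1) u) - m^2*y*(S ((n:ℤ)-1) y)*(S ((p:ℤ)-1) u)) * hu' + (- 4 * (S ((n:ℤ)-2) y)*(S ((p:ℤ)-1) u) - 4 * (S ((n:ℤ)-1)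 y)*(S ((p:ℤ)-1) u) - y*(S ((n:ℤ)-2) y)*(S ((p:ℤ)-1) u) + 2 * y*(S ((n:ℤ)-1) y)*(S ((p:ℤ)-1) u) + m⁻¹^2*(S ((n:ℤ)-2) y)*(S ((p:ℤ)-1) u) + 2 * m⁻¹^2*(S ((n:ℤ)-1) y)*(S ((p:ℤ)-1) u) + 4 * m*m⁻¹*(S ((n:ℤ)-2) y)*(S ((p:ℤ)-1) u) + 4 * m*m⁻¹*(S ((n:ℤ)-1) y)*(S ((p:ℤ)-1) u) - m*m⁻¹*y*(S ((n:ℤ)-1) y)*(S ((p:ℤ)-1) u) - 3 * m*m⁻¹^3*(S ((n:ℤ)-1) y)*(S ((p:ℤ)-1) u) + m^2*(S ((n:ℤ)-2) y)*(S ((p:ℤ)-1) u) + 2 * m^2*(S ((n:ℤ)-1) y)*(S ((p:ℤ)-1) u) - 3 * m^3*m⁻¹*(S ((n:ℤ)-1) y)*(S ((p:ℤ)-1) u)) * hR1 + (- 2 * (S ((n:ℤ)-2) y)*(S ((p:ℤ)-2) u) + 2 * (S ((n:ℤ)-2) y)*(S ((p:ℤ)-1) u) - 2 * (S ((n:ℤ)-1)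 y)*(S ((p:ℤ)-2) u) + 6 * (S ((n:ℤ)-1) y)*(S ((p:ℤ)-1) u) - 4 * (S ((n:ℤ)-1) y)^2*(S ((n:ℤ)-2) y)*(S ((p:ℤ)-1) u) - 4 * (S ((n:ℤ)-1) y)^3*(S ((p:ℤ)-1) u) + y*(S ((n:ℤ)-1) y)*(S ((p:ℤ)-2) u) - y*(S ((n:ℤ)-1) y)*(S ((p:ℤ)-1) u) - y*(S ((n:ℤ)-1) y)^2*(S ((n:ℤ)-2) y)*(S ((p:ℤ)-1) u) + 2 * y*(S ((n:ℤ)-1) y)^3*(S ((p:ℤ)-1) u) + 2 * y^2*(S ((n:ℤ)-1) y)^2*(S ((n:ℤ)-2) y)*(S ((p:ℤ)-1) u) + 2 * y^2*(S ((n:ℤ)-1) y)^3*(S ((p:ℤ)-1) u) - y^3*(S ((n:ℤ)-1) y)^3*(S ((p:ℤ)-1) u) + m⁻¹^2*(S ((n:ℤ)-1) y)*(S ((p:ℤ)-2) u) - 3 * m⁻¹^2*(S ((n:ℤ)-1) y)*(S ((p:ℤ)-1) u) + m⁻¹^2*(S ((n:ℤ)-1) y)^2*(S ((n:ℤ)-2)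 y)*(S ((p:ℤ)-1) u) + 2 * m⁻¹^2*(S ((n:ℤ)-1) y)^3*(S ((p:ℤ)-1) u) - 2 * m⁻¹^2*y*(S ((n:ℤ)-1) y)^2*(S ((n:ℤ)-2) y)*(S ((p:ℤ)-1) u) - 2 * m⁻¹^2*y*(S ((n:ℤ)-1) y)^3*(S ((p:ℤ)-1) u) + m⁻¹^4*y*(S ((n:ℤ)-1) y)^3*(S ((p:ℤ)-1) u) - 5 * m*m⁻¹*y*(S ((n:ℤ)-1) y)^2*(S ((n:ℤ)-2) y)*(S ((p:ℤ)-1) u) - 3 * m*m⁻¹*y*(S ((n:ℤ)-1) y)^3*(S ((p:ℤ)-1) u) + 2 * m*m⁻¹*y^2*(S ((n:ℤ)-1) y)^3*(S ((p:ℤ)-1) u) + 5 * m*m⁻¹^3*(S ((n:ℤ)-1) y)^2*(S ((n:ℤ)-2) y)*(S ((p:ℤ)-1) u) + 3 * m*m⁻¹^3*(S ((n:ℤ)-1) y)^3*(S ((p:ℤ)-1) u) - 2 * m*m⁻¹^5*(S ((n:ℤ)-1) y)^3*(S ((p:ℤ)-1) u) + m^2*(S ((n:ℤ)-1) y)*(S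 ((p:ℤ)-2) u) - 3 * m^2*(S ((n:ℤ)-1) y)*(S ((p:ℤ)-1) u) + m^2*(S ((n:ℤ)-1) y)^2*(S ((n:ℤ)-2) y)*(S ((p:ℤ)-1) u) + 2 * m^2*(S ((n:ℤ)-1) y)^3*(S ((p:ℤ)-1) u) - 2 * m^2*y*(S ((n:ℤ)-1) y)^2*(S ((n:ℤ)-2) y)*(S ((p:ℤ)-1) u) - 2 * m^2*y*(S ((n:ℤ)-1) y)^3*(S ((p:ℤ)-1) u) + 4 * m^2*m⁻¹^2*(S ((n:ℤ)-1) y)^2*(S ((n:ℤ)-2) y)*(S ((p:ℤ)-1) u) + 4 * m^2*m⁻¹^2*(S ((n:ℤ)-1) y)^3*(S ((p:ℤ)-1) u) + m^2*m⁻¹^2*y*(S ((n:ℤ)-1) y)^3*(S ((p:ℤ)-1) u) - 3 * m^2*m⁻¹^4*(S ((n:ℤ)-1) y)^3*(S ((p:ℤ)-1) u) + 5 * m^3*m⁻¹*(S ((n:ℤ)-1) y)^2*(S ((n:ℤ)-2) y)*(S ((p:ℤ)-1) u) + 3 * m^3*m⁻¹*(S ((n:ℤ)-1) y)^3*(S ((p:ℤ)-1)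 u) - 4 * m^3*m⁻¹^3*(S ((n:ℤ)-1) y)^3*(S ((p:ℤ)-1) u) + m^4*y*(S ((n:ℤ)-1) y)^3*(S ((p:ℤ)-1) u) - 3 * m^4*m⁻¹^2*(S ((n:ℤ)-1) y)^3*(S ((p:ℤ)-1) u) - 2 * m^5*m⁻¹*(S ((n:ℤ)-1) y)^3*(S ((p:ℤ)-1) u)) * hm')
  · norm_num; ring1
end

section
/- Let y ∈ ℂ with y ≠ 2 and S_{n-1}(y) ≠ 0. Set c = (2·S_n(y) - y·S_{n-1}(y)) / ((y - 2)·S_{n-1}(y)), a = (y-2)·S_{n-1}(y)²·(S_n(y) - S_{n-1}(y)), b = S_n(y) + (y-3)·S_{n-1}(y) + (y-2)(y+2)·S_{n-1}(y)²·(S_n(y) - S_{n-1}(y)), and assume a ≠ 0. Then 1 + (c² - 1)·(1 - b/(4a)) = -(S_n(y) - S_{n-1}(y))² / ((y-2)³·S_{n-1}(y)⁴). -/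
theorem d_formula_C2n3
    (S : ℤ → ℂ → ℂ)
    (hS0 : ∀ z, S 0 z = 1) (hS1 : ∀ z, S 1 z = z)
    (hS : ∀ (k : ℤ) (z : ℂ), S k z = z * S (k - 1) z - S (k - 2) z)
    (n : ℤ) (hn : n ≠ 0) (y : ℂ) (hy : y ≠ 2) (hSn : S (n - 1) y ≠ 0)
    (c a b : ℂ)
    (hc : c = (2 * S n y - y * S (n - 1) y) / ((y - 2) * S (n - 1) y))
    (ha : a = (y - 2) * (S (n - 1) y) ^ 2 * (S n y - S (n - 1) y))
    (hb : b = S n y + (y - 3) * S (n - 1) y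
            + (y - 2) * (y + 2) * (S (n - 1) y) ^ 2 * (S n y - S (n - 1) y))
    (ha0 : a ≠ 0) :
    1 + (c ^ 2 - 1) * (1 - b / (4 * a))
      = -((S n y - S (n - 1) y) ^ 2) / ((y - 2) ^ 3 * (S (n - 1) y) ^ 4) := by
  have hm1 : S (-1) y = 0 := by
    have h := hS 1 y
    rw [show (1:ℤ) - 1 = 0 by ring, show (1:ℤ) - 2 = -1 by ring, hS0, hS1] at h
    linear_combination h
  have key : ∀ k : ℤ, S k y ^ 2 - y * S k y * S (k - 1) y + S (k - 1) y ^ 2 = 1 := by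
    intro k
    induction k using Int.induction_on with
    | zero =>
      rw [show (0:ℤ) - 1 = -1 by ring, hS0, hm1]; ring
    | succ k ih =>
      have h := hS ((k:ℤ) + 1) y
      rw [show ((k:ℤ) + 1) - 1 = k by ring, show ((k:ℤ) + 1) - 2 = k - 1 by ring] at h
      rw [show ((k:ℤ) + 1) - 1 = k by ring]
      linear_combination ih + (S ((k:ℤ) + 1) y - S ((k:ℤ) - 1) y) * h
    | pred k ih =>
      have h := hS (-(k:ℤ)) y
      rw [show (-(k:ℤ)) - 1 = -k - 1 by ring, show (-(k:ℤ)) - 2 = -k - 2 by ring] at h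
      rw [show (-(k:ℤ) - 1) - 1 = -k - 2 by ring]
      linear_combination ih + (S (-(k:ℤ) - 2) y - S (-(k:ℤ)) y) * h
  have hkey := key n
  have hy2 : y - 2 ≠ 0 := sub_ne_zero.mpr hy
  have huv : S n y - S (n - 1) y ≠ 0 := by
    intro h0
    apply ha0
    rw [ha, h0]; ring
  subst hc ha hb
  set u := S n y with hu
  set v := S (n - 1) y with hv
  field_simp
  linear_combination (4*(-v^2*(y-2)^2*(u-v) - u - v*(y-3) + u - v + (y-2)*v)) * hkey
end

section
/- Let z ∈ ℂ with z ≠ 2, S_{n-1}(z) ≠ 0, and S_n(z) ≠ S_{n-1}(z). Set c = (2·S_n(z) - z·S_{n-1}(z)) / ((z - 2)·S_{n-1}(z)), a = S_{n-1}(z)·(S_n(z) - S_{n-1}(z)), b = 1 + (z+2)·S_{n-1}(z)·(S_n(z) - S_{n-1}(z)). Then 1 + (c² - 1)·(1 - b/(4a)) = -(S_n(z) - S_{n-1}(z)) / ((z-2)²·S_{n-1}(z)³). -/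
theorem d_formula_C2n2
    (S : ℤ → ℂ → ℂ)
    (hS0 : ∀ z, S 0 z = 1) (hS1 : ∀ z, S 1 z = z)
    (hS : ∀ (k : ℤ) (z : ℂ), S k z = z * S (k - 1) z - S (k - 2) z)
    (n : ℤ) (hn : n ≠ 0) (z : ℂ) (hz : z ≠ 2) (hSn : S (n - 1) z ≠ 0)
    (hne : S n z ≠ S (n - 1) z)
    (c a b : ℂ)
    (hc : c = (2 * S n z - z * S (n - 1) z) / ((z - 2) * S (n - 1) z))
    (ha : a = S (n - 1) z * (S n z - S (n - 1) z))
    (hb : b = 1 + (z + 2) * S (n - 1) z * (S n z - S (n - 1) z)) :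
    1 + (c ^ 2 - 1) * (1 - b / (4 * a))
      = -(S n z - S (n - 1) z) / ((z - 2) ^ 2 * (S (n - 1) z) ^ 3) := by
  have hSm1 : S (-1) z = 0 := by
    have h1 := hS 1 z
    norm_num at h1
    rw [hS0, hS1] at h1
    linear_combination h1
  have key : ∀ k : ℤ, S k z ^ 2 - z * S k z * S (k - 1) z + S (k - 1) z ^ 2 = 1 := by
    intro k
    induction k using Int.induction_on with
    | zero =>
        rw [show (0:ℤ) - 1 = -1 by ring, hS0, hSm1]; ring
    | succ i ih =>
        have e := hS ((i : ℤ) + 1) z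
        rw [show ((i:ℤ) + 1) - 1 = i by ring, show ((i:ℤ) + 1) - 2 = i - 1 by ring] at e
        rw [show ((i:ℤ) + 1) - 1 = i by ring, e]
        linear_combination ih
    | pred i ih =>
        have e := hS (-(i : ℤ)) z
        rw [show (-(i:ℤ)) - 1 = -i - 1 by ring, show (-(i:ℤ)) - 2 = -i - 1 - 1 by ring] at e
        linear_combination ih + (S (-(i:ℤ) - 1 - 1) z - S (-(i:ℤ)) z) * e
  have hz2 : (z : ℂ) - 2 ≠ 0 := sub_ne_zero.mpr hz
  have hd : S n z - S (n - 1) z ≠ 0 := sub_ne_zero.mpr hne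
  have R : S n z ^ 2 - z * S n z * S (n - 1) z + S (n - 1) z ^ 2 - 1 = 0 := by
    linear_combination key n
  have h1 : 1 + (c ^ 2 - 1) * (1 - b / (4 * a)) =
      (-((z - 2) * S n z * S (n - 1) z) - 1
        + (S n z ^ 2 - z * S n z * S (n - 1) z + S (n - 1) z ^ 2 - 1)
          * (-((z - 2) * S (n - 1) z * (S n z - S (n - 1) z)) - 1))
        / ((z - 2) ^ 2 * S (n - 1) z ^ 3 * (S n z - S (n - 1) z)) := by
    subst hc ha hb
    field_simp
    ring
  rw [R, zero_mul, add_zero] at h1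
  rw [h1, div_eq_div_iff (mul_ne_zero (mul_ne_zero (pow_ne_zero 2 hz2) (pow_ne_zero 3 hSn)) hd)
    (mul_ne_zero (pow_ne_zero 2 hz2) (pow_ne_zero 3 hSn))]
  linear_combination ((z - 2) ^ 2 * S (n - 1) z ^ 3) * key n
end

section
/- Let z ∈ ℂ with z ≠ 2 and S_{n-1}(z) ≠ 0. Set c = (2·S_n(z) - z·S_{n-1}(z)) / ((z - 2)·S_{n-1}(z)), a = S_{n-1}(z)², b = -1 + (z+2)·S_{n-1}(z)². Then 1 + (c² - 1)·(1 - b/(4a)) = 1 / ((z-2)²·S_{n-1}(z)⁴). -/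
theorem d_formula_C2n_neg2n
    (S : ℤ → ℂ → ℂ)
    (hS0 : ∀ z, S 0 z = 1) (hS1 : ∀ z, S 1 z = z)
    (hS : ∀ (k : ℤ) (z : ℂ), S k z = z * S (k - 1) z - S (k - 2) z)
    (n : ℤ) (hn : n ≠ 0) (z : ℂ) (hz : z ≠ 2) (hSn : S (n - 1) z ≠ 0)
    (c a b : ℂ)
    (hc : c = (2 * S n z - z * S (n - 1) z) / ((z - 2) * S (n - 1) z))
    (ha : a = (S (n - 1) z) ^ 2)
    (hb : b = -1 + (z + 2) * (S (n - 1) z) ^ 2) :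
    1 + (c ^ 2 - 1) * (1 - b / (4 * a))
      = 1 / ((z - 2) ^ 2 * (S (n - 1) z) ^ 4) := by
  have hSm1 : S (-1) z = 0 := by
    have h := hS 1 z
    rw [hS1, show (1:ℤ) - 1 = 0 by norm_num, hS0, show (1:ℤ) - 2 = -1 by norm_num] at h
    linear_combination h
  have step : ∀ k : ℤ,
      S k z ^ 2 - z * S k z * S (k - 1) z + S (k - 1) z ^ 2
        = S (k - 1) z ^ 2 - z * S (k - 1) z * S (k - 2) z + S (k - 2) z ^ 2 := by
    intro k
    have h := hS k z
    linear_combination (S k z - S (k-2) z) * h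
  have key : ∀ k : ℤ, S k z ^ 2 - z * S k z * S (k - 1) z + S (k - 1) z ^ 2 = 1 := by
    intro k
    induction k using Int.induction_on with
    | zero =>
      rw [show (0:ℤ) - 1 = -1 by norm_num, hS0, hSm1]; ring
    | succ i ih =>
      have h := step (i + 1)
      rw [show (i:ℤ) + 1 - 2 = i - 1 by ring] at h
      rw [show (i:ℤ) + 1 - 1 = i by ring] at h ⊢
      rw [h]; exact ih
    | pred i ih =>
      have h := step (-i)
      rw [show (-i:ℤ) - 2 = -i - 1 - 1 by ring] at h
      rw [← h]; exact ih
  have hI := key n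
  have hz2 : z - 2 ≠ 0 := sub_ne_zero.mpr hz
  subst hc ha hb
  field_simp
  linear_combination (4 * (1 - (z-2) * S (n-1) z ^ 2)) * hI
end

section
/- Let A, B ∈ SL_2(ℂ) with tr(AB) = tr(A⁻¹B⁻¹) = y, let n be a positive integer, and let U = (A⁻¹B⁻¹)ⁿ(AB)ⁿ. Then U = S_n(y)²·I + S_{n-1}(y)²·BAB⁻¹A⁻¹ - S_n(y)·S_{n-1}(y)·(B⁻¹A⁻¹ + BA). -/
open Matrix

lemma cayley2 (M : Matrix.SpecialLinearGroup (Fin 2) ℂ) :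
    (M : Matrix (Fin 2) (Fin 2) ℂ) + ((M⁻¹ : Matrix.SpecialLinearGroup (Fin 2) ℂ) : Matrix (Fin 2) (Fin 2) ℂ)
      = Matrix.trace (M : Matrix (Fin 2) (Fin 2) ℂ) • 1 := by
  rw [Matrix.SpecialLinearGroup.coe_inv]
  ext i j
  fin_cases i <;> fin_cases j <;>
    simp [Matrix.adjugate_fin_two, Matrix.trace_fin_two, Matrix.one_apply, add_comm]

lemma pow_eq (S : ℤ → ℂ → ℂ)
    (hS0 : ∀ z, S 0 z = 1) (hS1 : ∀ z, S 1 z = z)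
    (hS : ∀ (k : ℤ) (z : ℂ), S k z = z * S (k - 1) z - S (k - 2) z)
    (M : Matrix.SpecialLinearGroup (Fin 2) ℂ) (y : ℂ)
    (hy : Matrix.trace (M : Matrix (Fin 2) (Fin 2) ℂ) = y) (n : ℕ) :
    ((M ^ n : Matrix.SpecialLinearGroup (Fin 2) ℂ) : Matrix (Fin 2) (Fin 2) ℂ)
      = S n y • 1 - S ((n : ℤ) - 1) y • ((M⁻¹ : Matrix.SpecialLinearGroup (Fin 2) ℂ) : Matrix (Fin 2) (Fin 2) ℂ) := by
  have hSneg : S (-1) y = 0 := by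
    have := hS 1 y
    simp [hS0, hS1] at this
    linear_combination this
  induction n with
  | zero => simp [hS0, hSneg]
  | succ n ih =>
    have hMM : ((M⁻¹ : Matrix.SpecialLinearGroup (Fin 2) ℂ) : Matrix (Fin 2) (Fin 2) ℂ) * (M : Matrix (Fin 2) (Fin 2) ℂ) = 1 := by
      rw [← Matrix.SpecialLinearGroup.coe_mul, inv_mul_cancel, Matrix.SpecialLinearGroup.coe_one]
    have hcay : (M : Matrix (Fin 2) (Fin 2) ℂ) = y • 1 - ((M⁻¹ : Matrix.SpecialLinearGroup (Fin 2) ℂ) : Matrix (Fin 2) (Fin 2) ℂ) := by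
      have := cayley2 M
      rw [hy] at this
      linear_combination (norm := abel) this
    have hrec : S ((n : ℤ) + 1) y = y * S n y - S ((n : ℤ) - 1) y := by
      have := hS ((n : ℤ) + 1) y
      rw [this]; ring_nf
    rw [pow_succ, Matrix.SpecialLinearGroup.coe_mul, ih, sub_mul, Matrix.smul_mul,
      Matrix.smul_mul, one_mul, hMM, hcay]
    push_cast
    simp only [add_sub_cancel_right]
    rw [hrec]
    rw [smul_sub, smul_smul]
    module

theorem U_expansion
    (S : ℤ → ℂ → ℂ)
    (hS0 : ∀ z, S 0 z = 1) (hS1 : ∀ z, S 1 z = z)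
    (hS : ∀ (k : ℤ) (z : ℂ), S k z = z * S (k - 1) z - S (k - 2) z)
    (A B : Matrix.SpecialLinearGroup (Fin 2) ℂ) (y : ℂ)
    (hy : Matrix.trace ((A * B : Matrix.SpecialLinearGroup (Fin 2) ℂ) : Matrix (Fin 2) (Fin 2) ℂ) = y)
    (hy' : Matrix.trace ((A⁻¹ * B⁻¹ : Matrix.SpecialLinearGroup (Fin 2) ℂ) : Matrix (Fin 2) (Fin 2) ℂ) = y)
    (n : ℕ) (hn : 0 < n) :
    (((A⁻¹ * B⁻¹) ^ n * (A * B) ^ n : Matrix.SpecialLinearGroup (Fin 2) ℂ) : Matrix (Fin 2) (Fin 2) ℂ)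
      = (S n y) ^ 2 • (1 : Matrix (Fin 2) (Fin 2) ℂ)
        + (S ((n : ℤ) - 1) y) ^ 2 • ((B * A * B⁻¹ * A⁻¹ : Matrix.SpecialLinearGroup (Fin 2) ℂ) : Matrix (Fin 2) (Fin 2) ℂ)
        - (S n y * S ((n : ℤ) - 1) y) • (((B⁻¹ * A⁻¹ : Matrix.SpecialLinearGroup (Fin 2) ℂ) : Matrix (Fin 2) (Fin 2) ℂ)
            + ((B * A : Matrix.SpecialLinearGroup (Fin 2) ℂ) : Matrix (Fin 2) (Fin 2) ℂ)) := by
  have hinv1 : (A⁻¹ * B⁻¹)⁻¹ = B * A := by group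
  have hinv2 : (A * B)⁻¹ = B⁻¹ * A⁻¹ := by group
  have h1 := pow_eq S hS0 hS1 hS (A⁻¹ * B⁻¹) y hy' n
  have h2 := pow_eq S hS0 hS1 hS (A * B) y hy n
  rw [hinv1] at h1
  rw [hinv2] at h2
  have hprod : ((B * A : Matrix.SpecialLinearGroup (Fin 2) ℂ) : Matrix (Fin 2) (Fin 2) ℂ)
      * ((B⁻¹ * A⁻¹ : Matrix.SpecialLinearGroup (Fin 2) ℂ) : Matrix (Fin 2) (Fin 2) ℂ)
      = ((B * A * B⁻¹ * A⁻¹ : Matrix.SpecialLinearGroup (Fin 2) ℂ) : Matrix (Fin 2) (Fin 2) ℂ) := by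
    rw [← Matrix.SpecialLinearGroup.coe_mul]
    simp only [Matrix.SpecialLinearGroup.coe_mul, Matrix.mul_assoc]
  rw [Matrix.SpecialLinearGroup.coe_mul, h1, h2]
  simp only [sub_mul, mul_sub, Matrix.smul_mul, Matrix.mul_smul, smul_smul, hprod, one_mul, mul_one]
  rw [smul_add]
  module
end
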